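/- arXiv:1812.11546 — 7 statements merged into one kernel-verified Lean document; each statement's English description precedes it below -/
import Mathlib

section
/- For every real number t ≤ 0, 1 + e^t·(e^{t+1} − 1 + t + t² − e·(1 + t + t²)) ≥ 0. -/
/-!
With `s = t + 1/2`, the left-hand side equals
`2 √e e^t (cosh s - cosh (1/2) - sinh (1/2) (s² - 1/4))`, so it suffices that `cosh s` lies above
the tangent of the convex function `u ↦ cosh √u` at `u = 1/4`, taken at `u = s²`. For `s ≥ 0`
the derivative of `cosh s - sinh (1/2) s²` is `sinh s - 2 sinh (1/2) s`, a convex function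
vanishing at `0` and `1/2`; hence it is nonpositive on `[0, 1/2]` and nonnegative beyond, and
`s = 1/2` is a minimum.
-/

open Real Set

lemma convexOn_sinh_sub_mul (c : ℝ) : ConvexOn ℝ (Ici 0) fun s ↦ sinh s - c * s := by
  refine convexOn_of_hasDerivWithinAt2_nonneg (f' := fun s ↦ cosh s - c) (f'' := sinh)
    (convex_Ici 0) (by fun_prop) (fun x _ ↦ ?_) (fun x _ ↦ ?_) (fun x hx ↦ ?_)
  · exact (((hasDerivAt_sinh x).sub ((hasDerivAt_id' x).const_mul c)).congr_deriv
      (by ring)).hasDerivWithinAt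
  · exact ((hasDerivAt_cosh x).sub_const c).hasDerivWithinAt
  · rw [interior_Ici] at hx
    exact sinh_nonneg_iff.2 hx.le

section ChordOfSinh

variable {a s : ℝ}

lemma sinh_le_sinh_div_mul_of_le (ha : 0 < a) (hs : 0 ≤ s) (hsa : s ≤ a) :
    sinh s ≤ sinh a / a * s := by
  have hseg : s ∈ segment ℝ 0 a := by rw [segment_eq_Icc ha.le]; exact ⟨hs, hsa⟩
  have := (convexOn_sinh_sub_mul (sinh a / a)).le_on_segment self_mem_Ici ha.le hseg
  simp only [sinh_zero, mul_zero, div_mul_cancel₀ _ ha.ne', sub_self, max_self] at this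
  linarith

lemma sinh_div_mul_le_sinh_of_le (ha : 0 < a) (has : a ≤ s) : sinh a / a * s ≤ sinh s := by
  have := (convexOn_sinh_sub_mul (sinh a / a)).le_right_of_left_le'' self_mem_Ici
    (ha.le.trans has : (0 : ℝ) ≤ s) ha has (by simp [div_mul_cancel₀ _ ha.ne'])
  simp only [div_mul_cancel₀ _ ha.ne', sub_self] at this
  linarith

end ChordOfSinh

lemma cosh_add_sinh_div_mul_sq_sub_sq_le_cosh_of_nonneg {a s : ℝ} (ha : 0 < a) (hs : 0 ≤ s) :
    cosh a + sinh a / (2 * a) * (s ^ 2 - a ^ 2) ≤ cosh s := by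
  set ψ : ℝ → ℝ := fun x ↦ cosh x - sinh a / (2 * a) * x ^ 2
  have hψ (x : ℝ) : HasDerivAt ψ (sinh x - sinh a / a * x) x := by
    refine ((hasDerivAt_cosh x).sub
      ((hasDerivAt_pow 2 x).const_mul (sinh a / (2 * a)))).congr_deriv ?_
    field_simp
    ring
  suffices ψ a ≤ ψ s by simp only [ψ] at this; linarith
  rcases le_total s a with hsa | has
  · refine antitoneOn_of_hasDerivWithinAt_nonpos (convex_Icc 0 a) (by fun_prop)
      (fun x _ ↦ (hψ x).hasDerivWithinAt) (fun x hx ↦ ?_) ⟨hs, hsa⟩ ⟨ha.le, le_rfl⟩ hsa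
    rw [interior_Icc] at hx
    exact sub_nonpos.2 (sinh_le_sinh_div_mul_of_le ha hx.1.le hx.2.le)
  · refine monotoneOn_of_hasDerivWithinAt_nonneg (convex_Ici a) (by fun_prop)
      (fun x _ ↦ (hψ x).hasDerivWithinAt) (fun x hx ↦ ?_) self_mem_Ici has has
    rw [interior_Ici] at hx
    exact sub_nonneg.2 (sinh_div_mul_le_sinh_of_le ha hx.le)

lemma cosh_add_sinh_div_mul_sq_sub_sq_le_cosh {a : ℝ} (ha : 0 < a) (s : ℝ) :
    cosh a + sinh a / (2 * a) * (s ^ 2 - a ^ 2) ≤ cosh s := by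
  simpa only [cosh_abs, sq_abs] using
    cosh_add_sinh_div_mul_sq_sub_sq_le_cosh_of_nonneg ha (abs_nonneg s)

theorem stmt_2_general (t : ℝ) :
    1 + Real.exp t * (Real.exp (t + 1) - 1 + t + t ^ 2
      - Real.exp 1 * (1 + t + t ^ 2)) ≥ 0 := by
  have key := cosh_add_sinh_div_mul_sq_sub_sq_le_cosh (a := 1 / 2) (by norm_num) (t + 1 / 2)
  have exp_one_eq : exp 1 = exp (1 / 2) ^ 2 := by rw [← exp_nat_mul]; norm_num
  have identity : 1 + exp t * (exp (t + 1) - 1 + t + t ^ 2 - exp 1 * (1 + t + t ^ 2)) =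
      2 * exp (1 / 2) * exp t * (cosh (t + 1 / 2) -
        (cosh (1 / 2) + sinh (1 / 2) / (2 * (1 / 2)) * ((t + 1 / 2) ^ 2 - (1 / 2) ^ 2))) := by
    rw [cosh_eq, cosh_eq, sinh_eq, exp_add, exp_one_eq]
    simp only [exp_neg, exp_add]
    field_simp
    ring
  rw [ge_iff_le, identity]
  exact mul_nonneg (by positivity) (sub_nonneg.2 key)

theorem stmt_2 (t : ℝ) (ht : t ≤ 0) :
    1 + Real.exp t * (Real.exp (t + 1) - 1 + t + t ^ 2
      - Real.exp 1 * (1 + t + t ^ 2)) ≥ 0 :=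
  stmt_2_general t
end

section
/- For all real x and all y with −π < y < π, |1/(1+e^{x+iy})| ≤ 1/((1+e^x)·cos(y/2)). -/
/-! Multiplying `1 + e^{x+iy}` by the unit `e^{-iy/2}` gives `e^{-iy/2} + e^x e^{iy/2}`, whose real part
is `(1 + e^x) cos (y/2)`; a complex number is at least as long as its real part. -/

open Complex in
theorem abs_one_add_mul_cos_half_le_norm (r y : ℝ) :
    |(1 + r) * Real.cos (y / 2)| ≤ ‖1 + r * exp (y * I)‖ := by
  have hrot : 1 + r * exp (y * I) =
      exp ((y / 2 : ℝ) * I) * (exp ((-(y / 2) : ℝ) * I) + r * exp ((y / 2 : ℝ) * I)) := by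
    rw [mul_add, ← exp_add, ← mul_left_comm, ← exp_add]
    push_cast
    ring_nf
    rw [exp_zero, add_comm]
  have hre : (exp ((-(y / 2) : ℝ) * I) + r * exp ((y / 2 : ℝ) * I)).re = (1 + r) * Real.cos (y / 2) := by
    rw [add_re, re_ofReal_mul, exp_ofReal_mul_I_re, exp_ofReal_mul_I_re, Real.cos_neg]
    ring
  rw [hrot, norm_mul, norm_exp_ofReal_mul_I, one_mul, ← hre]
  exact abs_re_le_norm _

theorem stmt_3 (x y : ℝ) (hy1 : -Real.pi < y) (hy2 : y < Real.pi) :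
    ‖(1 / (1 + Complex.exp (x + y * Complex.I)) : ℂ)‖ ≤
      1 / ((1 + Real.exp x) * Real.cos (y / 2)) := by
  have hcos : 0 < Real.cos (y / 2) := Real.cos_pos_of_mem_Ioo ⟨by linarith, by linarith⟩
  have hpos : 0 < (1 + Real.exp x) * Real.cos (y / 2) := by positivity
  have hbound := abs_one_add_mul_cos_half_le_norm (Real.exp x) y
  rw [abs_of_pos hpos, Complex.ofReal_exp, ← Complex.exp_add] at hbound
  rw [norm_div, norm_one]
  exact one_div_le_one_div_of_le hpos hbound
end

section
/- For all real x and all y with −π < y < π, |1/(1+e^{−(x+iy)})| ≤ 1/((1+e^{−x})·cos(y/2)). -/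
/-! Factoring out `e^{iy/2}` writes `1 + a e^{iy}` as a unimodular number times
`e^{-iy/2} + a e^{iy/2}`, whose real part is `(1 + a) cos (y/2)`; a modulus dominates the
absolute value of the real part. -/

open Complex in
theorem Complex.abs_one_add_mul_abs_cos_half_le_norm_one_add (a y : ℝ) :
    |1 + a| * |Real.cos (y / 2)| ≤ ‖1 + a * exp (y * I)‖ := by
  set u := exp ((y / 2 : ℝ) * I)
  set v := exp ((-(y / 2) : ℝ) * I)
  have huv : u * v = 1 := by
    rw [← exp_add, ← add_mul, ← ofReal_add, add_neg_cancel, ofReal_zero, zero_mul, exp_zero]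
  have hu2 : exp (y * I) = u ^ 2 := by
    rw [← exp_nat_mul]; push_cast; ring_nf
  have hfactor : 1 + a * exp (y * I) = u * (v + a * u) := by
    rw [hu2]; linear_combination -huv
  have hre : (v + a * u).re = (1 + a) * Real.cos (y / 2) := by
    simp only [add_re, re_ofReal_mul, exp_ofReal_mul_I_re, Real.cos_neg, u, v]; ring
  calc |1 + a| * |Real.cos (y / 2)| = |(v + a * u).re| := by rw [hre, abs_mul]
    _ ≤ ‖v + a * u‖ := abs_re_le_norm _
    _ = ‖1 + a * exp (y * I)‖ := by rw [hfactor, norm_mul, norm_exp_ofReal_mul_I, one_mul]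

theorem stmt_4 (x y : ℝ) (hy1 : -Real.pi < y) (hy2 : y < Real.pi) :
    ‖(1 / (1 + Complex.exp (-(x + y * Complex.I))))‖ ≤
      1 / ((1 + Real.exp (-x)) * Real.cos (y / 2)) := by
  have hcos : 0 < Real.cos (y / 2) := Real.cos_pos_of_mem_Ioo ⟨by linarith, by linarith⟩
  have hexp : Complex.exp (-(x + y * Complex.I)) =
      Real.exp (-x) * Complex.exp ((-y : ℝ) * Complex.I) := by
    rw [Complex.ofReal_exp, ← Complex.exp_add]; push_cast; ring_nf
  have hkey := Complex.abs_one_add_mul_abs_cos_half_le_norm_one_add (Real.exp (-x)) (-y)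
  rw [neg_div, Real.cos_neg, abs_of_pos hcos, abs_of_pos (by positivity), ← hexp] at hkey
  rw [norm_div, norm_one]
  exact one_div_le_one_div_of_le (by positivity) hkey
end

section
/- For every real number t, ((t² + π²)/((1+t)² + π²)) · (1 − (e−1)/(e·(e^t+1)))² ≤ 1. -/
set_option maxHeartbeats 1000000 in
private lemma aux_poly (t x e p : ℝ) (hx0 : 0 < x) (hxe : x < e)
    (he1 : 2.718 < e) (he2 : e < 2.719) (hp : 9.86 < p) (ht : t < -1/2) :
    (t ^ 2 + p) * (x + 1) ^ 2 ≤ ((1 + t) ^ 2 + p) * (x + e) ^ 2 := by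
  have hne : (0:ℝ) ≤ -2*t-1 := by linarith
  have hee : e * e < 2.719 * 2.719 := by nlinarith
  have hsq : (x+1)^2 ≤ (e+1)^2 := by nlinarith
  have h1 : (-2*t-1) * (x+1)^2 ≤ (-2*t-1) * (e+1)^2 :=
    mul_le_mul_of_nonneg_left hsq hne
  have h2 : (-2*t-1) * (e+1)^2 ≤ (-2*t-1) * 13.9 :=
    mul_le_mul_of_nonneg_left (by nlinarith) hne
  have h3 : (-2*t-1) * 13.9 ≤ 6.38 * ((1+t)^2 + 9.86) := by
    nlinarith [sq_nonneg (6.38*(t+1) + 13.9)]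
  have ha : (6.38:ℝ) ≤ e^2 - 1 := by nlinarith
  have h4 : 6.38 * ((1+t)^2 + 9.86) ≤ (e^2-1) * ((1+t)^2 + p) :=
    calc 6.38 * ((1+t)^2 + 9.86) ≤ (e^2-1) * ((1+t)^2 + 9.86) :=
          mul_le_mul_of_nonneg_right ha (by positivity)
      _ ≤ (e^2-1) * ((1+t)^2 + p) :=
          mul_le_mul_of_nonneg_left (by linarith) (by linarith)
  have h5 : (e^2-1) * ((1+t)^2 + p) ≤ (e-1)*(2*x+e+1) * ((1+t)^2 + p) := by
    have hq : 0 < (1+t)^2 + p := by nlinarith [sq_nonneg (1+t)]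
    have : e^2 - 1 ≤ (e-1)*(2*x+e+1) := by nlinarith
    nlinarith
  nlinarith [h1, h2, h3, h4, h5]

theorem stmt_8 (t : ℝ) :
    ((t ^ 2 + Real.pi ^ 2) / ((1 + t) ^ 2 + Real.pi ^ 2)) *
      (1 - (Real.exp 1 - 1) / (Real.exp 1 * (Real.exp t + 1))) ^ 2 ≤ 1 := by
  have hE0 : 0 < Real.exp t := Real.exp_pos t
  have he1 : (2.7182818283 : ℝ) < Real.exp 1 := Real.exp_one_gt_d9
  have he2 : Real.exp 1 < 2.7182818286 := Real.exp_one_lt_d9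
  have hπ : (3.141592 : ℝ) < Real.pi := Real.pi_gt_d6
  have hπ2 : (9.86 : ℝ) < Real.pi ^ 2 := by nlinarith
  have hD : 0 < Real.exp 1 * (Real.exp t + 1) := by positivity
  have hden : 0 < (1 + t) ^ 2 + Real.pi ^ 2 := by positivity
  have hbr : 1 - (Real.exp 1 - 1) / (Real.exp 1 * (Real.exp t + 1)) =
      (Real.exp 1 * Real.exp t + 1) / (Real.exp 1 * (Real.exp t + 1)) := by
    field_simp; ring
  rw [hbr, div_pow, div_mul_div_comm, div_le_one (by positivity)]
  have key : (t ^ 2 + Real.pi ^ 2) * (Real.exp 1 * Real.exp t + 1) ^ 2 ≤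
      ((1 + t) ^ 2 + Real.pi ^ 2) * (Real.exp 1 * (Real.exp t + 1)) ^ 2 := by
    rcases le_or_gt (-1/2) t with ht | ht
    · have h1 : t ^ 2 ≤ (1 + t) ^ 2 := by nlinarith
      have h2 : (Real.exp 1 * Real.exp t + 1) ^ 2 ≤
          (Real.exp 1 * (Real.exp t + 1)) ^ 2 := by nlinarith
      nlinarith [sq_nonneg (Real.exp 1 * Real.exp t + 1), sq_nonneg Real.pi]
    · have hE1 : Real.exp t < 1 := by
        rw [show (1:ℝ) = Real.exp 0 by simp]
        exact Real.exp_lt_exp.mpr (by linarith)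
      have hx : Real.exp 1 * Real.exp t < Real.exp 1 := by nlinarith
      have heq : Real.exp 1 * (Real.exp t + 1) =
          Real.exp 1 * Real.exp t + Real.exp 1 := by ring
      rw [heq]
      exact aux_poly t (Real.exp 1 * Real.exp t) (Real.exp 1) (Real.pi ^ 2)
        (by positivity) hx (by linarith) (by linarith) hπ2 ht
  exact key
end

section
/- For every real number t ≤ 0 with t ≠ 0 and t ≠ −1, |(t/(1+t)) · (1 − (e−1)/(e·(1−e^t)))| ≤ 1. -/
/-!
Clearing the inner fraction, the expression is `t (1 - e^(t+1)) / ((1 + t) e (1 - eᵗ))`, so it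
suffices to compare the absolute values of numerator and denominator. With `s = t + 1 ≤ 1` this is
`(1 - s) |1 - eˢ| ≤ |s| (e - eˢ)`, which for `0 ≤ s ≤ 1` says that `eˢ` lies below the chord
`1 + s (e - 1)` of the convex function `exp` over `[0, 1]`, and for `s ≤ 0` that it lies above
that line, which follows from `eˢ ≥ 1 + s` and `e ≥ 2`.
-/

open Real

lemma exp_le_one_add_mul_exp_one_sub_one {s : ℝ} (hs₀ : 0 ≤ s) (hs₁ : s ≤ 1) :
    exp s ≤ 1 + s * (exp 1 - 1) := by
  have hconv := convexOn_exp.2 (Set.mem_univ 0) (Set.mem_univ 1)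
    (sub_nonneg.2 hs₁) hs₀ (sub_add_cancel 1 s)
  simp only [smul_eq_mul, mul_zero, mul_one, zero_add, exp_zero] at hconv
  linarith

lemma one_add_mul_exp_one_sub_one_le_exp {s : ℝ} (hs : s ≤ 0) :
    1 + s * (exp 1 - 1) ≤ exp s := by
  have he : 2 ≤ exp 1 := by linarith [add_one_le_exp 1]
  nlinarith [add_one_le_exp s]

lemma abs_mul_one_sub_exp_add_one_le {t : ℝ} (ht : t ≤ 0) :
    |t * (1 - exp (t + 1))| ≤ |(1 + t) * (exp 1 * (1 - exp t))| := by
  have hexp : exp (t + 1) = exp 1 * exp t := by rw [exp_add, mul_comm]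
  rcases le_total 0 (t + 1) with hs | hs
  · have hchord := exp_le_one_add_mul_exp_one_sub_one hs (by linarith)
    refine abs_le_abs_of_nonneg
      (mul_nonneg_of_nonpos_of_nonpos ht (sub_nonpos.2 (one_le_exp hs))) ?_
    linear_combination hchord - (1 + t) * hexp
  · have hchord := one_add_mul_exp_one_sub_one_le_exp hs
    refine abs_le_abs_of_nonpos
      (mul_nonpos_of_nonpos_of_nonneg ht (sub_nonneg.2 (exp_le_one_iff.2 hs))) ?_
    linear_combination hchord + (1 + t) * hexp

theorem stmt_9_general (t : ℝ) (ht : t ≤ 0) (h0 : t ≠ 0) :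
    |(t / (1 + t)) * (1 - (Real.exp 1 - 1) / (Real.exp 1 * (1 - Real.exp t)))| ≤ 1 := by
  have hden : exp 1 * (1 - exp t) ≠ 0 :=
    mul_ne_zero (exp_pos 1).ne' (sub_ne_zero.2 (exp_lt_one_iff.2 (ht.lt_of_ne h0)).ne')
  have hrewrite : (t / (1 + t)) * (1 - (exp 1 - 1) / (exp 1 * (1 - exp t)))
      = t * (1 - exp (t + 1)) / ((1 + t) * (exp 1 * (1 - exp t))) := by
    rw [one_sub_div hden, div_mul_div_comm, exp_add]
    ring
  rw [hrewrite, abs_div]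
  exact div_le_one_of_le₀ (abs_mul_one_sub_exp_add_one_le ht) (abs_nonneg _)

theorem stmt_9 (t : ℝ) (ht : t ≤ 0) (h0 : t ≠ 0) (h1 : t ≠ -1) :
    |(t / (1 + t)) * (1 - (Real.exp 1 - 1) / (Real.exp 1 * (1 - Real.exp t)))| ≤ 1 :=
  stmt_9_general t ht h0
end

section
/- The function h(t) = (t/(1+t)) · (1 − (e−1)/(e·(1−e^t))) satisfies h'(t) = (1 + e^t(e^{t+1} − 1 + t + t² − e(1+t+t²))) / (e·(e^t−1)²·(1+t)²) ≥ 0 for all t < 0 with t ≠ −1; in particular h is monotonically increasing on (−∞,−1) and on (−1,0). -/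
open Real Set

noncomputable def h (t : ℝ) : ℝ :=
  (t / (1 + t)) * (1 - (Real.exp 1 - 1) / (Real.exp 1 * (1 - Real.exp t)))

lemma aux_sinh_le (x : ℝ) (hx : 0 ≤ x) : Real.sinh x ≤ x * Real.cosh x := by
  have hmono : MonotoneOn (fun u : ℝ => u * Real.cosh u - Real.sinh u) (Set.Ici 0) := by
    apply monotoneOn_of_deriv_nonneg (convex_Ici 0)
    · fun_prop
    · apply Differentiable.differentiableOn; fun_prop
    · intro u hu
      rw [interior_Ici] at hu
      have hd : HasDerivAt (fun u : ℝ => u * Real.cosh u - Real.sinh u)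
          (1 * Real.cosh u + u * Real.sinh u - Real.cosh u) u :=
        ((hasDerivAt_id u).mul (Real.hasDerivAt_cosh u)).sub (Real.hasDerivAt_sinh u)
      rw [hd.deriv]
      have : (0:ℝ) ≤ u * Real.sinh u := mul_nonneg hu.le (Real.sinh_nonneg_iff.2 hu.le)
      linarith
  have := hmono (Set.self_mem_Ici) (Set.mem_Ici.2 hx) hx
  simp at this
  linarith

lemma aux_ratio {a b : ℝ} (ha : 0 < a) (hab : a ≤ b) :
    b * Real.sinh a ≤ a * Real.sinh b := by
  have hmono : MonotoneOn (fun u : ℝ => Real.sinh u / u) (Set.Icc a b) := by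
    apply monotoneOn_of_deriv_nonneg (convex_Icc a b)
    · apply ContinuousOn.div Real.continuous_sinh.continuousOn continuousOn_id
      intro u hu; exact ne_of_gt (lt_of_lt_of_le ha hu.1)
    · intro u hu
      rw [interior_Icc] at hu
      have hu0 : u ≠ 0 := ne_of_gt (lt_trans ha hu.1)
      exact ((Real.hasDerivAt_sinh u).div (hasDerivAt_id u) hu0).differentiableAt.differentiableWithinAt
    · intro u hu
      rw [interior_Icc] at hu
      have hu0 : 0 < u := lt_trans ha hu.1
      have hd0 := (Real.hasDerivAt_sinh u).div (hasDerivAt_id u) (ne_of_gt hu0)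
      have hd : HasDerivAt (fun u : ℝ => Real.sinh u / u)
          ((Real.cosh u * u - Real.sinh u * 1) / u ^ 2) u := by exact hd0
      rw [hd.deriv]
      apply div_nonneg _ (sq_nonneg _)
      have := aux_sinh_le u hu0.le
      nlinarith
  have h := hmono (Set.left_mem_Icc.2 hab) (Set.right_mem_Icc.2 hab) hab
  have hb : 0 < b := lt_of_lt_of_le ha hab
  rw [div_le_div_iff₀ ha hb] at h
  linarith

noncomputable def phi (u : ℝ) : ℝ :=
  Real.cosh u - Real.sinh (1/2) * u ^ 2 - Real.cosh (1/2) + Real.sinh (1/2) / 4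

lemma phi_deriv (u : ℝ) : HasDerivAt phi (Real.sinh u - Real.sinh (1/2) * (2 * u)) u := by
  unfold phi
  have : HasDerivAt (fun u : ℝ => Real.cosh u - Real.sinh (1/2) * u ^ 2 - Real.cosh (1/2)
      + Real.sinh (1/2) / 4)
      (Real.sinh u - Real.sinh (1/2) * (2 * u ^ 1) - 0 + 0) u := by
    exact (((Real.hasDerivAt_cosh u).sub (((hasDerivAt_pow 2 u)).const_mul _)).sub
      (hasDerivAt_const u _)).add (hasDerivAt_const u _)
  simpa using this

lemma phi_half : phi (1/2) = 0 := by unfold phi; ring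

lemma phi_nonneg (u : ℝ) : 0 ≤ phi u := by
  have key : ∀ v : ℝ, 0 ≤ v → 0 ≤ phi v := by
    intro v hv
    have hs : (0:ℝ) < Real.sinh (1/2) := Real.sinh_pos_iff.2 (by norm_num)
    rcases le_total v (1/2) with hle | hge
    · have hanti : AntitoneOn phi (Set.Icc 0 (1/2 : ℝ)) := by
        apply antitoneOn_of_deriv_nonpos (convex_Icc _ _)
        · exact fun x _ => ((phi_deriv x).continuousAt).continuousWithinAt
        · intro x hx; exact (phi_deriv x).differentiableAt.differentiableWithinAt
        · intro x hx
          rw [interior_Icc] at hx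
          rw [(phi_deriv x).deriv]
          have := aux_ratio hx.1 (le_of_lt hx.2)
          nlinarith
      have := hanti (Set.mem_Icc.2 ⟨hv, hle⟩) (Set.right_mem_Icc.2 (by linarith)) hle
      rw [phi_half] at this; exact this
    · have hmono : MonotoneOn phi (Set.Ici (1/2 : ℝ)) := by
        apply monotoneOn_of_deriv_nonneg (convex_Ici _)
        · exact fun x _ => ((phi_deriv x).continuousAt).continuousWithinAt
        · intro x hx; exact (phi_deriv x).differentiableAt.differentiableWithinAt
        · intro x hx
          rw [interior_Ici] at hx
          rw [(phi_deriv x).deriv]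
          have := aux_ratio (by norm_num : (0:ℝ) < 1/2) (le_of_lt hx)
          nlinarith
      have := hmono (Set.self_mem_Ici) (Set.mem_Ici.2 hge) hge
      rw [phi_half] at this; exact this
  rcases le_total 0 u with hu | hu
  · exact key u hu
  · have : phi u = phi (-u) := by unfold phi; rw [Real.cosh_neg]; ring
    rw [this]; exact key (-u) (by linarith)

lemma numerator_nonneg (t : ℝ) :
    0 ≤ 1 + Real.exp t * (Real.exp (t + 1) - 1 + t + t ^ 2
        - Real.exp 1 * (1 + t + t ^ 2)) := by
  have hid : 1 + Real.exp t * (Real.exp (t + 1) - 1 + t + t ^ 2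
      - Real.exp 1 * (1 + t + t ^ 2)) = 2 * Real.exp (t + 1/2) * phi (t + 1/2) := by
    unfold phi
    rw [Real.cosh_eq, Real.sinh_eq, Real.cosh_eq]
    have e1 : Real.exp 1 = Real.exp (1/2) * Real.exp (1/2) := by
      rw [← Real.exp_add]; norm_num
    have e2 : Real.exp (t + 1) = Real.exp t * Real.exp (1/2) * Real.exp (1/2) := by
      rw [← Real.exp_add, ← Real.exp_add]; ring_nf
    have e3 : Real.exp (t + 1/2) = Real.exp t * Real.exp (1/2) := (Real.exp_add t (1/2))
    have e4 : Real.exp (-(t + 1/2)) = (Real.exp t * Real.exp (1/2))⁻¹ := by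
      rw [Real.exp_neg, e3]
    have e5 : Real.exp (-(1/2) : ℝ) = (Real.exp (1/2 : ℝ))⁻¹ := Real.exp_neg _
    rw [e1, e2, e3, e4, e5]
    have h1 : Real.exp t ≠ 0 := Real.exp_ne_zero t
    have h2 : Real.exp (1/2 : ℝ) ≠ 0 := Real.exp_ne_zero _
    field_simp
    ring
  rw [hid]
  exact mul_nonneg (by positivity) (phi_nonneg _)

lemma h_hasDeriv (t : ℝ) (ht : t < 0) (ht1 : t ≠ -1) :
    HasDerivAt h
      ((1 + Real.exp t * (Real.exp (t + 1) - 1 + t + t ^ 2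
          - Real.exp 1 * (1 + t + t ^ 2))) /
        (Real.exp 1 * (Real.exp t - 1) ^ 2 * (1 + t) ^ 2)) t := by
  have h1t : (1 : ℝ) + t ≠ 0 := by intro hc; apply ht1; linarith
  have hexp : Real.exp t < 1 := Real.exp_lt_one_iff.2 ht
  have hme : (1 : ℝ) - Real.exp t ≠ 0 := by intro hc; nlinarith
  have hden : Real.exp 1 * (1 - Real.exp t) ≠ 0 :=
    mul_ne_zero (Real.exp_ne_zero 1) hme
  have hadd : HasDerivAt (fun s : ℝ => 1 + s) 1 t := by
    simpa using (hasDerivAt_id t).const_add (1 : ℝ)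
  have hf1 : HasDerivAt (fun s : ℝ => s / (1 + s))
      ((1 * (1 + t) - t * 1) / (1 + t) ^ 2) t :=
    (hasDerivAt_id t).div hadd h1t
  have hg : HasDerivAt (fun s : ℝ => Real.exp 1 * (1 - Real.exp s))
      (Real.exp 1 * -Real.exp t) t := by
    exact ((Real.hasDerivAt_exp t).const_sub 1).const_mul _
  have hf2 : HasDerivAt (fun s : ℝ => 1 - (Real.exp 1 - 1) / (Real.exp 1 * (1 - Real.exp s)))
      (-((0 * (Real.exp 1 * (1 - Real.exp t)) - (Real.exp 1 - 1) * (Real.exp 1 * -Real.exp t)) /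
        (Real.exp 1 * (1 - Real.exp t)) ^ 2)) t := by
    exact ((hasDerivAt_const t (Real.exp 1 - 1)).div hg hden).const_sub 1
  have hprod := hf1.mul hf2
  have heq : (1 * (1 + t) - t * 1) / (1 + t) ^ 2 *
        (1 - (Real.exp 1 - 1) / (Real.exp 1 * (1 - Real.exp t))) +
      t / (1 + t) *
        -((0 * (Real.exp 1 * (1 - Real.exp t)) - (Real.exp 1 - 1) * (Real.exp 1 * -Real.exp t)) /
          (Real.exp 1 * (1 - Real.exp t)) ^ 2) =
      (1 + Real.exp t * (Real.exp (t + 1) - 1 + t + t ^ 2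
          - Real.exp 1 * (1 + t + t ^ 2))) /
        (Real.exp 1 * (Real.exp t - 1) ^ 2 * (1 + t) ^ 2) := by
    have hE : Real.exp 1 ≠ 0 := Real.exp_ne_zero 1
    have hme' : Real.exp t - 1 ≠ 0 := fun hc => hme (by linarith)
    rw [Real.exp_add]
    field_simp
    ring
  rw [heq] at hprod
  exact hprod

theorem stmt_10 :
    (∀ t : ℝ, t < 0 → t ≠ -1 →
      HasDerivAt h
        ((1 + Real.exp t * (Real.exp (t + 1) - 1 + t + t ^ 2
            - Real.exp 1 * (1 + t + t ^ 2))) /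
          (Real.exp 1 * (Real.exp t - 1) ^ 2 * (1 + t) ^ 2)) t ∧
      0 ≤ (1 + Real.exp t * (Real.exp (t + 1) - 1 + t + t ^ 2
            - Real.exp 1 * (1 + t + t ^ 2))) /
          (Real.exp 1 * (Real.exp t - 1) ^ 2 * (1 + t) ^ 2)) ∧
    MonotoneOn h (Set.Iio (-1)) ∧ MonotoneOn h (Set.Ioo (-1) 0) := by
  have hkey : ∀ t : ℝ, t < 0 → t ≠ -1 →
      HasDerivAt h
        ((1 + Real.exp t * (Real.exp (t + 1) - 1 + t + t ^ 2
            - Real.exp 1 * (1 + t + t ^ 2))) /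
          (Real.exp 1 * (Real.exp t - 1) ^ 2 * (1 + t) ^ 2)) t ∧
      0 ≤ (1 + Real.exp t * (Real.exp (t + 1) - 1 + t + t ^ 2
            - Real.exp 1 * (1 + t + t ^ 2))) /
          (Real.exp 1 * (Real.exp t - 1) ^ 2 * (1 + t) ^ 2) := by
    intro t ht ht1
    refine ⟨h_hasDeriv t ht ht1, div_nonneg (numerator_nonneg t) (by positivity)⟩
  refine ⟨hkey, ?_, ?_⟩
  · apply monotoneOn_of_deriv_nonneg (convex_Iio _)
    · intro x hx
      have hx' : x < -1 := hx
      exact ((hkey x (by linarith) (by intro hc; linarith [hc ▸ hx'])).1.continuousAt).continuousWithinAt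
    · intro x hx
      rw [interior_Iio] at hx
      have hx' : x < -1 := hx
      exact ((hkey x (by linarith) (ne_of_lt hx')).1).differentiableAt.differentiableWithinAt
    · intro x hx
      rw [interior_Iio] at hx
      have hx' : x < -1 := hx
      obtain ⟨hd, hn⟩ := hkey x (by linarith) (ne_of_lt hx')
      rw [hd.deriv]; exact hn
  · apply monotoneOn_of_deriv_nonneg (convex_Ioo _ _)
    · intro x hx
      exact ((hkey x hx.2 (ne_of_gt hx.1)).1.continuousAt).continuousWithinAt
    · intro x hx
      rw [interior_Ioo] at hx
      exact ((hkey x hx.2 (ne_of_gt hx.1)).1).differentiableAt.differentiableWithinAt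
    · intro x hx
      rw [interior_Ioo] at hx
      obtain ⟨hd, hn⟩ := hkey x hx.2 (ne_of_gt hx.1)
      rw [hd.deriv]; exact hn
end

section
/- Let ζ be a complex number with |Im ζ| ≤ π and set l = log(e/(e−1)). Then |(Log(1+e^ζ)/(1+Log(1+e^ζ))) · ((e^{−l} + e^ζ)/e^ζ)| ≤ 1, where Log denotes the principal branch of the complex logarithm (interpreting the expression by its continuous extension at points where 1+e^ζ lies on the branch cut or the expression has a removable singularity). -/
/-!
Put `w = Log (1 + e^ζ)`, so that `e^ζ = e^w - 1`, `|Im w| ≤ π`, and `e^{-l} + e^ζ = e^{-1} (e^{w+1} - 1)`.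
The claim becomes `|w| |e^{w+1} - 1| ≤ e |w + 1| |e^w - 1|` on the strip `|Im w| ≤ π`.
With `w = x + iy` and `c = cos y`, the difference of the squares of the two sides is affine in `c`.
Replacing `c` by `1 - y²/2 ≤ cos y` or by Jordan's bound `cos y ≤ 1 - 2y²/π²`, according to the sign
of its slope, leaves a polynomial in `y²` whose coefficients are nonnegative functions of `x`: the
constant term is the case `y = 0`, and the `y²` coefficient is controlled by the tangent bound
`e^x (1 - x) ≤ 1` together with a quadratic of negative discriminant.
-/

open Real

lemma quadratic_nonneg_of_discrim_nonpos {K : Type*} [Field K] [LinearOrder K]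
    [IsStrictOrderedRing K] {a b c : K} (ha : 0 < a) (h : discrim a b c ≤ 0) (x : K) :
    0 ≤ a * (x * x) + b * x + c := by
  have hsq : 4 * a * (a * (x * x) + b * x + c) = (2 * a * x + b) ^ 2 - discrim a b c := by
    rw [discrim]; ring
  refine (mul_nonneg_iff_of_pos_left (by positivity : (0 : K) < 4 * a)).mp ?_
  rw [hsq]
  nlinarith [sq_nonneg (2 * a * x + b)]

lemma exp_mul_le_of_le_mul_one_sub {x b C : ℝ} (hC : 0 ≤ C) (h : b ≤ C * (1 - x)) :
    rexp x * b ≤ C := by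
  have htangent : rexp x * (1 - x) ≤ 1 := by
    calc rexp x * (1 - x) ≤ rexp x * rexp (-x) :=
          mul_le_mul_of_nonneg_left (one_sub_le_exp_neg x) (exp_pos x).le
      _ = 1 := by rw [← exp_add, add_neg_cancel, exp_zero]
  calc rexp x * b ≤ rexp x * (C * (1 - x)) := mul_le_mul_of_nonneg_left h (exp_pos x).le
    _ = C * (rexp x * (1 - x)) := by ring
    _ ≤ C := mul_le_of_le_one_right hC htangent

lemma exp_le_one_add_mul_of_mem_Icc {t : ℝ} (h₀ : 0 ≤ t) (h₁ : t ≤ 1) :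
    rexp t ≤ 1 + (rexp 1 - 1) * t := by
  have h := convexOn_exp.2 (Set.mem_univ 0) (Set.mem_univ 1) (sub_nonneg.2 h₁) h₀ (by ring)
  simp only [smul_eq_mul, mul_zero, mul_one, zero_add, exp_zero] at h
  linarith

lemma mul_exp_one_le_exp_add_one (x : ℝ) : rexp 1 * (x + 1) ≤ rexp (x + 1) := by
  rw [exp_add, mul_comm]
  exact mul_le_mul_of_nonneg_right (add_one_le_exp x) (exp_pos 1).le

lemma exp_add_one_mul_two_mul_add_one_nonpos {x : ℝ} (h₁ : -1 ≤ x) (h₀ : x ≤ 0) :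
    rexp (x + 1) * (2 * x + 1) - (rexp 1 + 1) * x - rexp 1 ≤ 0 := by
  have hE := exp_one_gt_d9
  rcases le_total x (-1 / 2) with hx | hx
  · have h := mul_le_mul_of_nonpos_right (add_one_le_exp (x + 1)) (by linarith : 2 * x + 1 ≤ 0)
    nlinarith
  · have h := mul_le_mul_of_nonneg_right
      (exp_le_one_add_mul_of_mem_Icc (t := x + 1) (by linarith) (by linarith))
      (by linarith : 0 ≤ 2 * x + 1)
    nlinarith [mul_nonneg (neg_nonneg.2 h₀) (by linarith : 0 ≤ x + 1)]

lemma sq_mul_exp_add_one_sub_one_le (x : ℝ) :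
    (x * (rexp (x + 1) - 1)) ^ 2 ≤ ((x + 1) * (rexp (x + 1) - rexp 1)) ^ 2 := by
  have hE := exp_one_gt_d9
  have hfactor : ((x + 1) * (rexp (x + 1) - rexp 1)) ^ 2 - (x * (rexp (x + 1) - 1)) ^ 2 =
      (rexp (x + 1) - (rexp 1 - 1) * x - rexp 1) *
        (rexp (x + 1) * (2 * x + 1) - (rexp 1 + 1) * x - rexp 1) := by ring
  rw [← sub_nonneg, hfactor]
  have hline := add_one_le_exp (x + 1)
  have htangent := mul_exp_one_le_exp_add_one x
  rcases le_total x (-1) with hx | hx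
  · have hle : rexp (x + 1) ≤ 1 := exp_le_one_iff.2 (by linarith)
    exact mul_nonneg (by nlinarith) (by nlinarith)
  rcases le_total x 0 with hx' | hx'
  · have hchord := exp_le_one_add_mul_of_mem_Icc (t := x + 1) (by linarith) (by linarith)
    exact mul_nonneg_of_nonpos_of_nonpos (by nlinarith)
      (exp_add_one_mul_two_mul_add_one_nonpos hx hx')
  · exact mul_nonneg (by nlinarith) (by nlinarith)

/-- The coefficient of `y²` in `e² |w + 1|² |e^w - 1|² - |w|² |e^{w+1} - 1|²` (with `w = x + iy`)
after `cos y` is replaced by `1 - s y²`. -/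
noncomputable def ySqCoeff (s x : ℝ) : ℝ :=
  rexp 1 ^ 2 - 1 - 2 * rexp 1 * rexp x * (rexp 1 - 1 - s * (rexp 1 * (x + 1) ^ 2 - x ^ 2))

lemma ySqCoeff_nonneg_of_le {s x : ℝ}
    (h : 2 * rexp 1 * (rexp 1 - 1 - s * (rexp 1 * (x + 1) ^ 2 - x ^ 2)) ≤
      (rexp 1 ^ 2 - 1) * (1 - x)) :
    0 ≤ ySqCoeff s x := by
  have hE := exp_one_gt_d9
  have := exp_mul_le_of_le_mul_one_sub (by nlinarith) h
  rw [ySqCoeff]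
  linarith

lemma ySqCoeff_half_nonneg (x : ℝ) : 0 ≤ ySqCoeff (1 / 2) x := by
  have hE₁ := exp_one_gt_d9
  have hE₂ := exp_one_lt_d9
  have hdiscrim : discrim (rexp 1 * (rexp 1 - 1)) (rexp 1 ^ 2 + 1) (2 * rexp 1 - 1) ≤ 0 := by
    rw [discrim]; nlinarith
  have hq := quadratic_nonneg_of_discrim_nonpos (by nlinarith) hdiscrim x
  exact ySqCoeff_nonneg_of_le (by nlinarith)

lemma ySqCoeff_two_div_pi_sq_nonneg (x : ℝ) : 0 ≤ ySqCoeff (2 / π ^ 2) x := by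
  have hE₁ := exp_one_gt_d9
  have hE₂ := exp_one_lt_d9
  have hπ₁ := pi_gt_d6
  have hπ₂ := pi_lt_d6
  have hπsq₁ : 9.8696 < π ^ 2 := by nlinarith
  have hπsq₂ : π ^ 2 < 9.86961 := by nlinarith
  have hdiscrim : discrim (4 * rexp 1 * (rexp 1 - 1)) (8 * rexp 1 ^ 2 - (rexp 1 ^ 2 - 1) * π ^ 2)
      (4 * rexp 1 ^ 2 - π ^ 2 * (rexp 1 - 1) ^ 2) ≤ 0 := by
    have ha : 18.68 ≤ 4 * rexp 1 * (rexp 1 - 1) := by nlinarith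
    have hb : -3.95 ≤ 8 * rexp 1 ^ 2 - (rexp 1 ^ 2 - 1) * π ^ 2 := by nlinarith
    have hb' : 8 * rexp 1 ^ 2 - (rexp 1 ^ 2 - 1) * π ^ 2 ≤ 0 := by nlinarith
    have hc : 0.41 ≤ 4 * rexp 1 ^ 2 - π ^ 2 * (rexp 1 - 1) ^ 2 := by nlinarith
    rw [discrim]
    nlinarith [mul_le_mul ha hc (by norm_num) (by linarith)]
  have hq := quadratic_nonneg_of_discrim_nonpos (by nlinarith) hdiscrim x
  refine ySqCoeff_nonneg_of_le ?_
  have hπ : 0 < π ^ 2 := by positivity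
  rw [← mul_le_mul_iff_of_pos_left hπ]
  have hcancel : π ^ 2 * (2 / π ^ 2) = 2 := by field_simp
  linear_combination hq - (2 * rexp 1 * (rexp 1 * (x + 1) ^ 2 - x ^ 2)) * hcancel

lemma sq_estimate_of_cos_le {x y s : ℝ} (hs : 0 ≤ s)
    (hcoeff : 0 ≤ ySqCoeff s x)
    (hcos : 0 ≤ (rexp 1 * (x + 1) ^ 2 - x ^ 2 + (rexp 1 - 1) * y ^ 2) * (1 - s * y ^ 2 - cos y)) :
    (x ^ 2 + y ^ 2) * (rexp (x + 1) ^ 2 - 2 * rexp (x + 1) * cos y + 1) ≤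
      rexp 1 ^ 2 * ((x + 1) ^ 2 + y ^ 2) * (rexp x ^ 2 - 2 * rexp x * cos y + 1) := by
  have hE : 1 ≤ rexp 1 := one_le_exp zero_le_one
  have hreal := sq_mul_exp_add_one_sub_one_le x
  have hT : rexp (x + 1) = rexp 1 * rexp x := by rw [exp_add, mul_comm]
  rw [hT] at hreal ⊢
  -- Both sides are affine in `cos y`; evaluate at `cos y = 1 - s y²` and add the slope term.
  have hexpand : rexp 1 ^ 2 * ((x + 1) ^ 2 + y ^ 2) * (rexp x ^ 2 - 2 * rexp x * cos y + 1) -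
      (x ^ 2 + y ^ 2) * ((rexp 1 * rexp x) ^ 2 - 2 * (rexp 1 * rexp x) * cos y + 1) =
      (((x + 1) * (rexp 1 * rexp x - rexp 1)) ^ 2 - (x * (rexp 1 * rexp x - 1)) ^ 2) +
        y ^ 2 * ySqCoeff s x +
        2 * rexp 1 * rexp x * s * y ^ 4 * (rexp 1 - 1) +
        2 * rexp 1 * rexp x *
          ((rexp 1 * (x + 1) ^ 2 - x ^ 2 + (rexp 1 - 1) * y ^ 2) * (1 - s * y ^ 2 - cos y)) := by
    rw [ySqCoeff]; ring
  rw [← sub_nonneg, hexpand]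
  have hquartic : 0 ≤ 2 * rexp 1 * rexp x * s * y ^ 4 * (rexp 1 - 1) :=
    mul_nonneg (by positivity) (sub_nonneg.2 hE)
  have hslope := mul_nonneg (by positivity : 0 ≤ 2 * rexp 1 * rexp x) hcos
  have hy := mul_nonneg (sq_nonneg y) hcoeff
  linarith

lemma sq_estimate_of_abs_le_pi {x y : ℝ} (hy : |y| ≤ π) :
    (x ^ 2 + y ^ 2) * (rexp (x + 1) ^ 2 - 2 * rexp (x + 1) * cos y + 1) ≤
      rexp 1 ^ 2 * ((x + 1) ^ 2 + y ^ 2) * (rexp x ^ 2 - 2 * rexp x * cos y + 1) := by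
  rcases le_total 0 (rexp 1 * (x + 1) ^ 2 - x ^ 2 + (rexp 1 - 1) * y ^ 2) with hslope | hslope
  · have hjordan := cos_le_one_sub_mul_cos_sq hy
    exact sq_estimate_of_cos_le (by positivity) (ySqCoeff_two_div_pi_sq_nonneg x)
      (mul_nonneg hslope (by linarith))
  · have hcos : 1 - y ^ 2 / 2 ≤ cos y := one_sub_sq_div_two_le_cos
    exact sq_estimate_of_cos_le (by norm_num) (ySqCoeff_half_nonneg x)
      (mul_nonneg_of_nonpos_of_nonpos hslope (by linarith))

lemma Complex.norm_exp_sub_one_sq (u : ℂ) :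
    ‖Complex.exp u - 1‖ ^ 2 = rexp u.re ^ 2 - 2 * rexp u.re * Real.cos u.im + 1 := by
  rw [Complex.sq_norm, Complex.normSq_apply]
  simp only [Complex.sub_re, Complex.sub_im, Complex.exp_re, Complex.exp_im, Complex.one_re,
    Complex.one_im]
  linear_combination rexp u.re ^ 2 * Real.sin_sq_add_cos_sq u.im

lemma Complex.norm_mul_norm_exp_add_one_sub_one_le {w : ℂ} (hw : |w.im| ≤ π) :
    ‖w‖ * ‖Complex.exp (w + 1) - 1‖ ≤ rexp 1 * (‖1 + w‖ * ‖Complex.exp w - 1‖) := by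
  rw [← pow_le_pow_iff_left₀ (by positivity) (by positivity) two_ne_zero, mul_pow, mul_pow,
    mul_pow, Complex.norm_exp_sub_one_sq, Complex.norm_exp_sub_one_sq, Complex.sq_norm,
    Complex.sq_norm, Complex.normSq_apply, Complex.normSq_apply]
  have := sq_estimate_of_abs_le_pi (x := w.re) hw
  simp only [Complex.add_re, Complex.add_im, Complex.one_re, Complex.one_im, add_zero]
  linear_combination this

lemma Complex.exp_neg_log_exp_one_div :
    Complex.exp (-(Real.log (rexp 1 / (rexp 1 - 1)) : ℂ)) = 1 - Complex.exp (-1) := by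
  have hpos : 0 < rexp 1 / (rexp 1 - 1) := div_pos (exp_pos 1) (by linarith [exp_one_gt_d9])
  have hreal : rexp (-Real.log (rexp 1 / (rexp 1 - 1))) = 1 - rexp (-1) := by
    rw [Real.exp_neg, Real.exp_log hpos, Real.exp_neg]
    field_simp
  rw [← Complex.ofReal_neg, ← Complex.ofReal_exp, hreal]
  push_cast
  rfl

theorem stmt_13_general (ζ : ℂ) :
    ‖((Complex.log (1 + Complex.exp ζ) / (1 + Complex.log (1 + Complex.exp ζ))) *
        ((Complex.exp (-(Real.log (Real.exp 1 / (Real.exp 1 - 1)) : ℂ)) + Complex.exp ζ) /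
          Complex.exp ζ))‖ ≤ 1 := by
  set w := Complex.log (1 + Complex.exp ζ) with hw
  by_cases h0 : 1 + Complex.exp ζ = 0
  · simp [hw, h0]
  have hζw : Complex.exp ζ = Complex.exp w - 1 := by rw [hw, Complex.exp_log h0]; ring
  have hnum : Complex.exp (-(Real.log (Real.exp 1 / (Real.exp 1 - 1)) : ℂ)) + Complex.exp ζ =
      Complex.exp (-1) * (Complex.exp (w + 1) - 1) := by
    rw [Complex.exp_neg_log_exp_one_div, hζw, mul_sub, ← Complex.exp_add, mul_one,
      neg_add_cancel_comm_assoc]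
    ring
  have hwim : |w.im| ≤ π := by rw [hw, Complex.log_im]; exact Complex.abs_arg_le_pi _
  rw [hnum, hζw, norm_mul, norm_div, norm_div, norm_mul, Complex.norm_exp]
  calc _ = ‖w‖ * ‖Complex.exp (w + 1) - 1‖ / (rexp 1 * (‖1 + w‖ * ‖Complex.exp w - 1‖)) := by
        rw [Complex.neg_re, Complex.one_re, Real.exp_neg]; ring
    _ ≤ 1 := div_le_one_of_le₀ (Complex.norm_mul_norm_exp_add_one_sub_one_le hwim) (by positivity)

theorem stmt_13 (ζ : ℂ) (hζ : |ζ.im| ≤ Real.pi) :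
    ‖((Complex.log (1 + Complex.exp ζ) / (1 + Complex.log (1 + Complex.exp ζ))) *
        ((Complex.exp (-(Real.log (Real.exp 1 / (Real.exp 1 - 1)) : ℂ)) + Complex.exp ζ) /
          Complex.exp ζ))‖ ≤ 1 :=
  stmt_13_general ζ
end
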